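/- Consider an evolving graph built by starting from the complete graph on 2μ vertices and at each step adding a new vertex connected to μ existing vertices, with uniform edge weight w = J/T. If T > Jμ then the only optimal set of φ(E') = c(E') + (J/T)|E'| is the empty set: for every subgraph S with n_s vertices and e_s internal edges one has n_s ≥ e_s·J/T + 1, and this inequality is preserved when adding a new vertex with μ_s ≤ μ edges into S, since μ_s·J/T ≤ μ·J/T < 1. -/

import Mathlib

open Finset
open scoped Classical

/-- Number of connected components of the subgraph with edge set `E'`,
including isolated vertices. -/
noncomputable def numComponents {V : Type*} [Fintype V] (E' : Finset (Sym2 V)) : ℕ :=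
  Nat.card (SimpleGraph.fromEdgeSet (E' : Set (Sym2 V))).ConnectedComponent

/-- Edge set of an evolving network: a complete graph on the first `2μ` vertices, and each
later vertex `v` attached by edges to the vertices in `nbr v`. -/
noncomputable def evolvingEdges (μ n : ℕ)
    (nbr : Fin (2 * μ + n) → Finset (Fin (2 * μ + n))) : Finset (Sym2 (Fin (2 * μ + n))) :=
  ((Finset.univ.filter
      (fun p : Fin (2 * μ + n) × Fin (2 * μ + n) => p.1.val < p.2.val ∧ p.2.val < 2 * μ)) ∪
    (Finset.univ.filter
      (fun p : Fin (2 * μ + n) × Fin (2 * μ + n) => p.1 ∈ nbr p.2 ∧ 2 * μ ≤ p.2.val))).image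
    (fun p => s(p.1, p.2))

/-! The edge set of the network is `(μ, μ)`-sparse: every nonempty vertex set `S` spans at most
`μ (#S - 1)` edges. Removing the newest vertex of `S` removes at most `μ` edges, unless `S` lies
inside the initial clique `K_{2μ}`, where `#S ≤ 2μ` gives `(#S).choose 2 ≤ μ (#S - 1)`. Summing
the bound over the connected components of a nonempty `E'` gives `μ c(E') + |E'| ≤ μ N`, hence
`φ(E') < N = φ(∅)` as soon as `μ J / T < 1`. -/

section Sparse

variable {V : Type*}

noncomputable def edgesWithin (E : Finset (Sym2 V)) (S : Finset V) : Finset (Sym2 V) :=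
  E.filter (fun e => ∀ v ∈ e, v ∈ S)

/-- `(μ, μ)`-sparsity in the sense of rigidity theory; by Nash-Williams' theorem it says that `E`
is a union of `μ` forests. -/
def IsSparse (μ : ℕ) (E : Finset (Sym2 V)) : Prop :=
  ∀ S : Finset V, S.Nonempty → #(edgesWithin E S) + μ ≤ μ * #S

variable {μ : ℕ} {E : Finset (Sym2 V)}

lemma mem_edgesWithin {S : Finset V} {e : Sym2 V} :
    e ∈ edgesWithin E S ↔ e ∈ E ∧ ∀ v ∈ e, v ∈ S :=
  mem_filter

lemma edgesWithin_mono {E' : Finset (Sym2 V)} (h : E' ⊆ E) (S : Finset V) :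
    edgesWithin E' S ⊆ edgesWithin E S :=
  filter_subset_filter _ h

lemma edgesWithin_empty : edgesWithin E ∅ = ∅ :=
  filter_false_of_mem fun e _ h => notMem_empty _ (h _ (Sym2.out_fst_mem e))

lemma card_edgesWithin_insert_le [DecidableEq V] (hE : ∀ e ∈ E, ¬e.IsDiag) {S : Finset V}
    {a : V} :
    #(edgesWithin E (insert a S)) ≤ #(edgesWithin E S) + #(S.filter fun u => s(u, a) ∈ E) := by
  calc #(edgesWithin E (insert a S))
      ≤ #(edgesWithin E S ∪ (S.filter fun u => s(u, a) ∈ E).image (s(·, a))) :=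
        card_le_card ?_
    _ ≤ _ := (card_union_le _ _).trans (Nat.add_le_add_left card_image_le _)
  intro e he
  obtain ⟨heE, heS⟩ := mem_edgesWithin.mp he
  simp only [mem_union, mem_edgesWithin, mem_image, mem_filter]
  induction e using Sym2.inductionOn with
  | hf x y =>
    have hxy : x ≠ y := fun h => hE _ heE (by simp [h])
    have hx := mem_insert.mp (heS x (Sym2.mem_mk_left x y))
    have hy := mem_insert.mp (heS y (Sym2.mem_mk_right x y))
    rcases hx with rfl | hx
    · exact Or.inr ⟨y, ⟨hy.resolve_left hxy.symm, by rwa [Sym2.eq_swap]⟩, Sym2.eq_swap⟩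
    rcases hy with rfl | hy
    · exact Or.inr ⟨x, ⟨hx, heE⟩, rfl⟩
    · exact Or.inl ⟨heE, by simp [hx, hy]⟩

lemma card_edgesWithin_le_choose_two (hE : ∀ e ∈ E, ¬e.IsDiag) (S : Finset V) :
    #(edgesWithin E S) ≤ (#S).choose 2 := by
  induction S using Finset.induction_on with
  | empty => simp [edgesWithin_empty]
  | insert a S ha ih =>
    rw [card_insert_of_notMem ha, Nat.choose_succ_succ', Nat.choose_one_right]
    linarith [card_edgesWithin_insert_le hE (S := S) (a := a),
      card_filter_le S fun u => s(u, a) ∈ E]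

lemma IsSparse.mono {E' : Finset (Sym2 V)} (hE : IsSparse μ E) (h : E' ⊆ E) :
    IsSparse μ E' := fun S hS =>
  (Nat.add_le_add_right (card_le_card (edgesWithin_mono h S)) μ).trans (hE S hS)

lemma isSparse_of_card_lowerNeighbors_le [LinearOrder V] [LocallyFiniteOrderBot V]
    (hE : ∀ e ∈ E, ¬e.IsDiag)
    (hlow : ∀ v, 2 * μ < #(Iic v) → #((Iio v).filter fun u => s(u, v) ∈ E) ≤ μ) :
    IsSparse μ E := by
  intro S
  induction S using Finset.induction_on_max with
  | empty => simp
  | insert a S hlt ih =>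
    intro _
    have ha : a ∉ S := fun h => lt_irrefl a (hlt a h)
    have hinsert := card_edgesWithin_insert_le hE (S := S) (a := a)
    rw [card_insert_of_notMem ha, mul_add_one]
    rcases S.eq_empty_or_nonempty with rfl | hS
    · simp_all [edgesWithin_empty]
    by_cases hlate : 2 * μ < #(Iic a)
    · have hdeg : #(S.filter fun u => s(u, a) ∈ E) ≤ μ :=
        (card_le_card fun u hu => by
          simp only [mem_filter, mem_Iio] at hu ⊢
          exact ⟨hlt u hu.1, hu.2⟩).trans (hlow a hlate)
      linarith [ih hS]
    · have hcard : #S + 1 ≤ 2 * μ := by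
        rw [← card_insert_of_notMem ha]
        refine (card_le_card fun u hu => ?_).trans (not_lt.mp hlate)
        rcases mem_insert.mp hu with rfl | hu
        · exact mem_Iic.mpr le_rfl
        · exact mem_Iic.mpr (hlt u hu).le
      have hclique : #(edgesWithin E (insert a S)) ≤ μ * #S := by
        refine (card_edgesWithin_le_choose_two hE _).trans ?_
        rw [card_insert_of_notMem ha, Nat.choose_two_right, Nat.add_sub_cancel]
        exact Nat.div_le_of_le_mul (by nlinarith)
      omega

lemma numComponents_empty [Fintype V] : numComponents (∅ : Finset (Sym2 V)) = Fintype.card V := by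
  rw [numComponents, coe_empty, SimpleGraph.fromEdgeSet_empty, ← Nat.card_eq_fintype_card]
  refine (Nat.card_eq_of_bijective _ ⟨fun u v h => ?_, fun K => K.exists_rep⟩).symm
  exact SimpleGraph.reachable_bot.mp (SimpleGraph.ConnectedComponent.exact h)

lemma connectedComponentMk_eq_of_mem_edge {e : Sym2 V} (he : e ∈ E) {u v : V} (hu : u ∈ e)
    (hv : v ∈ e) :
    (SimpleGraph.fromEdgeSet (E : Set (Sym2 V))).connectedComponentMk u =
      (SimpleGraph.fromEdgeSet (E : Set (Sym2 V))).connectedComponentMk v := by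
  by_cases huv : u = v
  · rw [huv]
  refine SimpleGraph.ConnectedComponent.connectedComponentMk_eq_of_adj ?_
  rw [SimpleGraph.fromEdgeSet_adj, ← (Sym2.mem_and_mem_iff huv).mp ⟨hu, hv⟩]
  exact ⟨he, huv⟩

lemma IsSparse.mul_numComponents_add_card_le [Fintype V] (hE : IsSparse μ E) :
    μ * numComponents E + #E ≤ μ * Fintype.card V := by
  set G := SimpleGraph.fromEdgeSet (E : Set (Sym2 V))
  let supp (K : G.ConnectedComponent) : Finset V := univ.filter (G.connectedComponentMk · = K)
  have hV : Fintype.card V = ∑ K, #(supp K) :=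
    card_eq_sum_card_fiberwise fun v _ => mem_univ _
  have hcard : #E = ∑ K, #(E.filter (G.connectedComponentMk ·.out.1 = K)) :=
    card_eq_sum_card_fiberwise fun e _ => mem_univ _
  have hcomp (K : G.ConnectedComponent) :
      #(E.filter (G.connectedComponentMk ·.out.1 = K)) + μ ≤ μ * #(supp K) := by
    refine le_trans ?_ (hE (supp K) ?_)
    · refine Nat.add_le_add_right (card_le_card fun e he => ?_) μ
      obtain ⟨heE, heK⟩ := mem_filter.mp he
      refine mem_edgesWithin.mpr ⟨heE, fun v hv => mem_filter.mpr ⟨mem_univ v, ?_⟩⟩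
      rw [connectedComponentMk_eq_of_mem_edge heE hv (Sym2.out_fst_mem e), heK]
    · obtain ⟨v, rfl⟩ := K.exists_rep
      exact ⟨v, mem_filter.mpr ⟨mem_univ v, rfl⟩⟩
  have hsum := sum_le_sum fun K (_ : K ∈ univ) => hcomp K
  rw [sum_add_distrib, sum_const, smul_eq_mul, ← hcard, ← mul_sum, ← hV, card_univ,
    ← Nat.card_eq_fintype_card] at hsum
  rw [numComponents]
  linarith

lemma IsSparse.card_edgesWithin_mul_add_one_le (hE : IsSparse μ E) {w : ℝ} (hw₀ : 0 ≤ w)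
    (hw : w * μ ≤ 1) {S : Finset V} (hS : S.Nonempty) :
    (#(edgesWithin E S) : ℝ) * w + 1 ≤ #S := by
  have hsparse : (#(edgesWithin E S) : ℝ) + μ ≤ μ * #S := by exact_mod_cast hE S hS
  have hS₁ : (1 : ℝ) ≤ #S := by exact_mod_cast hS.card_pos
  calc (#(edgesWithin E S) : ℝ) * w + 1
      ≤ (μ * (#S - 1)) * w + 1 := by gcongr; linarith
    _ = (w * μ) * (#S - 1) + 1 := by ring
    _ ≤ 1 * (#S - 1) + 1 := by gcongr
    _ = #S := by ring

lemma IsSparse.numComponents_add_mul_card_lt [Fintype V] (hE : IsSparse μ E) (hne : E.Nonempty)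
    {w : ℝ} (hw : w * μ < 1) :
    (numComponents E : ℝ) + w * #E < Fintype.card V := by
  have hbound := hE.mul_numComponents_add_card_le
  have hμ : 0 < μ := Nat.pos_of_ne_zero fun h => by
    subst h
    exact hne.card_pos.ne' (by simpa using hbound)
  have hboundR : (μ : ℝ) * numComponents E + #E ≤ μ * Fintype.card V := by exact_mod_cast hbound
  have hE₀ : (0 : ℝ) < #E := by exact_mod_cast hne.card_pos
  have hμR : (0 : ℝ) < μ := by exact_mod_cast hμ
  refine lt_of_mul_lt_mul_left ?_ hμR.le
  nlinarith

end Sparse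

section EvolvingNetwork

variable {μ n : ℕ} {nbr : Fin (2 * μ + n) → Finset (Fin (2 * μ + n))}

lemma exists_lt_of_mem_evolvingEdges
    (hnbr : ∀ v : Fin (2 * μ + n), 2 * μ ≤ v.val → ∀ u ∈ nbr v, u < v)
    {e : Sym2 (Fin (2 * μ + n))} (he : e ∈ evolvingEdges μ n nbr) :
    ∃ u v, u < v ∧ e = s(u, v) ∧ (v.val < 2 * μ ∨ u ∈ nbr v) := by
  obtain ⟨⟨u, v⟩, hp, rfl⟩ := mem_image.mp he
  rcases mem_union.mp hp with h | h <;> obtain ⟨-, h₁, h₂⟩ := mem_filter.mp h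
  · exact ⟨u, v, h₁, rfl, Or.inl h₂⟩
  · exact ⟨u, v, hnbr v h₂ u h₁, rfl, Or.inr h₁⟩

lemma not_isDiag_of_mem_evolvingEdges
    (hnbr : ∀ v : Fin (2 * μ + n), 2 * μ ≤ v.val → ∀ u ∈ nbr v, u < v) :
    ∀ e ∈ evolvingEdges μ n nbr, ¬e.IsDiag := by
  intro e he
  obtain ⟨u, v, huv, rfl, -⟩ := exists_lt_of_mem_evolvingEdges hnbr he
  exact Sym2.mk_isDiag_iff.not.mpr huv.ne

lemma lowerNeighbors_evolvingEdges_subset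
    (hnbr : ∀ v : Fin (2 * μ + n), 2 * μ ≤ v.val → ∀ u ∈ nbr v, u < v)
    {v : Fin (2 * μ + n)} (hv : 2 * μ ≤ v.val) :
    (Iio v).filter (fun u => s(u, v) ∈ evolvingEdges μ n nbr) ⊆ nbr v := by
  intro u hu
  obtain ⟨huv, he⟩ := mem_filter.mp hu
  obtain ⟨u', v', hlt', heq, hmem⟩ := exists_lt_of_mem_evolvingEdges hnbr he
  rcases Sym2.eq_iff.mp heq with ⟨rfl, rfl⟩ | ⟨rfl, rfl⟩
  · exact hmem.resolve_left hv.not_gt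
  · exact absurd (mem_Iio.mp huv) hlt'.asymm

lemma isSparse_evolvingEdges
    (hnbr : ∀ v : Fin (2 * μ + n), 2 * μ ≤ v.val → #(nbr v) ≤ μ ∧ ∀ u ∈ nbr v, u < v) :
    IsSparse μ (evolvingEdges μ n nbr) := by
  have hlt v hv := (hnbr v hv).2
  refine isSparse_of_card_lowerNeighbors_le (not_isDiag_of_mem_evolvingEdges hlt) fun v hv => ?_
  rw [Fin.card_Iic] at hv
  exact (card_le_card (lowerNeighbors_evolvingEdges_subset hlt (by omega))).trans
    (hnbr v (by omega)).1

end EvolvingNetwork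

theorem evolving_network_high_temperature_optimal_set_empty_general
    (μ n : ℕ)
    (nbr : Fin (2 * μ + n) → Finset (Fin (2 * μ + n)))
    (hnbr : ∀ v : Fin (2 * μ + n), 2 * μ ≤ v.val →
      (nbr v).card = μ ∧ ∀ u ∈ nbr v, u.val < v.val)
    (J T : ℝ) (hJ : 0 < J) (hT : J * μ < T) :
    (∀ S : Finset (Fin (2 * μ + n)), S.Nonempty →
      (((evolvingEdges μ n nbr).filter (fun e => ∀ v ∈ e, v ∈ S)).card : ℝ) * (J / T) + 1
        ≤ S.card) ∧
    ∀ E' ∈ (evolvingEdges μ n nbr).powerset,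
      (∀ E'' ∈ (evolvingEdges μ n nbr).powerset,
        (numComponents E'' : ℝ) + (J / T) * E''.card
          ≤ (numComponents E' : ℝ) + (J / T) * E'.card) →
      E' = ∅ := by
  have hsparse : IsSparse μ (evolvingEdges μ n nbr) :=
    isSparse_evolvingEdges fun v hv => ⟨(hnbr v hv).1.le, (hnbr v hv).2⟩
  have hT₀ : 0 < T := lt_of_le_of_lt (by positivity) hT
  have hw : J / T * μ < 1 := by rwa [div_mul_eq_mul_div, div_lt_one hT₀]
  refine ⟨fun S hS => ?_, fun E' hE' hopt => ?_⟩
  · have h := hsparse.card_edgesWithin_mul_add_one_le (by positivity) hw.le hS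
    -- `edgesWithin` decides membership classically, the statement with the instance for `Fin`
    rwa [edgesWithin, filter_congr_decidable] at h
  by_contra hne
  have hlt := (hsparse.mono (mem_powerset.mp hE')).numComponents_add_mul_card_lt
    (nonempty_iff_ne_empty.mpr hne) hw
  have hle := hopt ∅ (empty_mem_powerset _)
  rw [numComponents_empty, card_empty, Nat.cast_zero, mul_zero, add_zero] at hle
  linarith

/-- On an evolving network built from the complete graph `K_{2μ}` by attaching each new vertex
with exactly `μ` edges to earlier vertices, if `T > Jμ` then for every nonempty vertex subset `S`
with `n_s` vertices and `e_s` internal edges one has `n_s ≥ e_s·J/T + 1`, and the only optimal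
set of `φ(E') = c(E') + (J/T)|E'|` is the empty edge set. -/
theorem evolving_network_high_temperature_optimal_set_empty
    (μ n : ℕ) (hμ : 1 ≤ μ)
    (nbr : Fin (2 * μ + n) → Finset (Fin (2 * μ + n)))
    (hnbr : ∀ v : Fin (2 * μ + n), 2 * μ ≤ v.val →
      (nbr v).card = μ ∧ ∀ u ∈ nbr v, u.val < v.val)
    (J T : ℝ) (hJ : 0 < J) (hT : J * μ < T) :
    (∀ S : Finset (Fin (2 * μ + n)), S.Nonempty →
      (((evolvingEdges μ n nbr).filter (fun e => ∀ v ∈ e, v ∈ S)).card : ℝ) * (J / T) + 1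
        ≤ S.card) ∧
    ∀ E' ∈ (evolvingEdges μ n nbr).powerset,
      (∀ E'' ∈ (evolvingEdges μ n nbr).powerset,
        (numComponents E'' : ℝ) + (J / T) * E''.card
          ≤ (numComponents E' : ℝ) + (J / T) * E'.card) →
      E' = ∅ :=
  evolving_network_high_temperature_optimal_set_empty_general μ n nbr hnbr J T hJ hT
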